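/- For all integers n > k ≥ 1, the endomorphism algebra of the k-th tensor power of the standard representation of the dicyclic group of degree n satisfies dim_ℂ End_{Dic_n}(V^{⊗k}) = (1/2)·binomial(2k,k). -/

import Mathlib

open scoped TensorProduct
open Matrix

noncomputable section

/-- `ℂ²`, the standard two-dimensional complex vector space. -/
abbrev V2 : Type := Fin 2 → ℂ

/-- The standard representation of a subgroup `G ≤ GL₂(ℂ)` on `ℂ²`, by matrix-vector
multiplication. -/
def stdRep (G : Subgroup (GL (Fin 2) ℂ)) : Representation ℂ G V2 where
  toFun g := Matrix.toLin' ((g : GL (Fin 2) ℂ) : Matrix (Fin 2) (Fin 2) ℂ)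
  map_one' := by
    simp only [OneMemClass.coe_one, Units.val_one, Matrix.toLin'_one]
    rfl
  map_mul' g h := by
    simp only [MulMemClass.coe_mul, Units.val_mul, Matrix.toLin'_mul]
    rfl

/-- `TPow j` is the `(j+1)`-st tensor power `V^{⊗(j+1)}` of `V = ℂ²`, realized as an
iterated binary tensor product (bundled as an object of `ModuleCat ℂ` so that the
recursion carries its module structure). -/
def TPow : ℕ → ModuleCat ℂ
  | 0 => ModuleCat.of ℂ V2
  | (j + 1) => ModuleCat.of ℂ (TPow j ⊗[ℂ] V2)

/-- The diagonal representation of `G ≤ GL₂(ℂ)` on `TPow j = V^{⊗(j+1)}`. -/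
def TPowRep (G : Subgroup (GL (Fin 2) ℂ)) : (j : ℕ) → Representation ℂ G (TPow j)
  | 0 => stdRep G
  | (j + 1) => (TPowRep G j).tprod (stdRep G)

/-- The basis vector `v_s^{⊗(j+1)}` of `TPow j = V^{⊗(j+1)}`, for `s : Fin 2`. -/
def vpow (s : Fin 2) : (j : ℕ) → TPow j
  | 0 => Pi.single s 1
  | (j + 1) => vpow s j ⊗ₜ[ℂ] Pi.single s 1

/-- The subspace `V_{j+1}` of `V^{⊗(j+1)}` spanned by `v₁^{⊗(j+1)}` and `v₂^{⊗(j+1)}`. -/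
def Vsub (j : ℕ) : Submodule ℂ (TPow j) := Submodule.span ℂ {vpow 0 j, vpow 1 j}

/-- The space `End_G(W)` of `G`-equivariant linear endomorphisms of a representation `W`. -/
def equivEnd {G W : Type*} [Group G] [AddCommGroup W] [Module ℂ W]
    (ρ : Representation ℂ G W) : Submodule ℂ (W →ₗ[ℂ] W) where
  carrier := {f | ∀ g : G, f ∘ₗ ρ g = ρ g ∘ₗ f}
  add_mem' := by
    intro f h hf hh g
    simp only [LinearMap.add_comp, LinearMap.comp_add, hf g, hh g]
  zero_mem' := by
    intro g
    simp only [LinearMap.zero_comp, LinearMap.comp_zero]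
  smul_mem' := by
    intro c f hf g
    simp only [LinearMap.smul_comp, LinearMap.comp_smul, hf g]

/-!
In the basis `e_a = e_{a 0} ⊗ ⋯ ⊗ e_{a (k-1)}` of `V^{⊗k}`, `a ∈ {0,1}^k`, the generator `A` acts
diagonally with eigenvalue `e^{kπi/n} ζ^{|a|}`, where `ζ = e^{-2πi/n}` is a primitive `n`-th root of
unity and `|a|` is the number of ones in `a`. As `|a| ≤ k < n`, the commutant of `A` is spanned by
the matrix units `E_{ab}` with `|a| = |b|`, so it has dimension `∑_w C(k,w)² = C(2k,k)`.
Conjugation by `X` is an involution of this commutant (`AXA = X`, and `X² = -1` acts by a scalar)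
whose fixed points form `End_{Dic_n}(V^{⊗k})`. Left multiplication by
`Z = 1 ⊗ ⋯ ⊗ 1 ⊗ diag(1,-1)`, which commutes with `A` and anticommutes with `X`, exchanges the
`±1`-eigenspaces of the involution, so the fixed points have half the dimension.
-/

open Module

section FixedPoints

variable {K M : Type*} [Field K] [NeZero (2 : K)] [AddCommGroup M] [Module K M]
  [FiniteDimensional K M]

theorem Submodule.finrank_eq_two_mul_finrank_inf_ker_sub_one (U : Submodule K M)
    {Φ Ψ : Module.End K M} (hΦ : Function.Involutive Φ) (hΨ : Function.Involutive Ψ)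
    (hΦΨ : ∀ m, Φ (Ψ m) = -Ψ (Φ m)) (hΦU : ∀ m ∈ U, Φ m ∈ U) (hΨU : ∀ m ∈ U, Ψ m ∈ U) :
    finrank K U = 2 * finrank K ↥(U ⊓ LinearMap.ker (Φ - 1)) := by
  set A := U ⊓ LinearMap.ker (Φ - 1)
  set B := U ⊓ LinearMap.ker (Φ + 1)
  have memA : ∀ m, m ∈ A ↔ m ∈ U ∧ Φ m = m := fun m => by
    simp [A, sub_eq_zero]
  have memB : ∀ m, m ∈ B ↔ m ∈ U ∧ Φ m = -m := fun m => by
    simp [B, add_eq_zero_iff_eq_neg]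
  have hsup : A ⊔ B = U := by
    refine le_antisymm (sup_le inf_le_left inf_le_left) fun m hm => ?_
    have hm' : m = (2 : K)⁻¹ • (m + Φ m) + (2 : K)⁻¹ • (m - Φ m) := by
      rw [← smul_add, add_add_sub_cancel, ← two_smul K m, smul_smul, inv_mul_cancel₀ two_ne_zero,
        one_smul]
    rw [hm']
    refine Submodule.add_mem_sup ((memA _).2 ⟨U.smul_mem _ (U.add_mem hm (hΦU m hm)), ?_⟩)
      ((memB _).2 ⟨U.smul_mem _ (U.sub_mem hm (hΦU m hm)), ?_⟩)
    · rw [map_smul, map_add, hΦ m, add_comm]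
    · rw [map_smul, map_sub, hΦ m, ← smul_neg, neg_sub]
  have hinf : A ⊓ B = ⊥ := by
    refine (Submodule.eq_bot_iff _).2 fun m hm => ?_
    have h := ((memA m).1 hm.1).2.symm.trans ((memB m).1 hm.2).2
    rwa [eq_neg_iff_add_eq_zero, ← two_smul K, smul_eq_zero, or_iff_right two_ne_zero] at h
  have hAB : ∀ m ∈ A, Ψ m ∈ B := fun m hm => by
    obtain ⟨hmU, hΦm⟩ := (memA m).1 hm
    exact (memB _).2 ⟨hΨU m hmU, by rw [hΦΨ, hΦm]⟩
  have hBA : ∀ m ∈ B, Ψ m ∈ A := fun m hm => by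
    obtain ⟨hmU, hΦm⟩ := (memB m).1 hm
    exact (memA _).2 ⟨hΨU m hmU, by rw [hΦΨ, hΦm, map_neg, neg_neg]⟩
  let e := LinearEquiv.ofInvolutive Ψ hΨ
  have hle : ∀ {P Q : Submodule K M}, (∀ m ∈ P, Ψ m ∈ Q) → finrank K P ≤ finrank K Q :=
    fun {P Q} h => (e.finrank_map_eq P).symm.trans_le
      (Submodule.finrank_mono (Submodule.map_le_iff_le_comap.2 h))
  have hdim := Submodule.finrank_sup_add_finrank_inf_eq A B
  rw [hsup, hinf, finrank_bot, add_zero] at hdim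
  rw [hdim, le_antisymm (hle hAB) (hle hBA), two_mul]

end FixedPoints

namespace Module.Basis

variable {K M ι : Type*} [Field K] [AddCommGroup M] [Module K M] [Fintype ι]

theorem finrank_ker_eq_card_of_apply_eq_smul (b : Basis ι K M) {T : Module.End K M}
    {c : ι → K} (hT : ∀ i, T (b i) = c i • b i) :
    finrank K (LinearMap.ker T) = Nat.card {i // c i = 0} := by
  classical
  have hrepr : ∀ m i, b.repr (T m) i = c i * b.repr m i := fun m i => by
    have : b.coord i ∘ₗ T = c i • b.coord i := b.ext fun j => by
      by_cases h : j = i <;> simp [hT, h]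
    simpa using LinearMap.congr_fun this m
  have hker : LinearMap.ker T =
      Submodule.span K (Set.range (b ∘ (Subtype.val : {i // c i = 0} → ι))) := by
    ext m
    rw [Set.range_comp, Subtype.range_coe_subtype, LinearMap.mem_ker, b.mem_span_image,
      ← b.repr.map_eq_zero_iff (x := T m)]
    simp only [Finsupp.ext_iff, hrepr, Finsupp.coe_zero, Pi.zero_apply, mul_eq_zero,
      or_iff_not_imp_right, Set.subset_def, Finset.mem_coe, Finsupp.mem_support_iff,
      Set.mem_ofPred_eq]
  rw [hker, finrank_span_eq_card (b.linearIndependent.comp _ Subtype.val_injective),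
    Nat.card_eq_fintype_card]

theorem finrank_centralizer_eq_card_of_apply_eq_smul (b : Basis ι K M) {D : Module.End K M}
    {d : ι → K} (hD : ∀ i, D (b i) = d i • b i) :
    finrank K (Subalgebra.centralizer K {D}).toSubmodule =
      Nat.card {p : ι × ι // d p.1 = d p.2} := by
  classical
  let _ := LieRing.ofAssociativeRing (A := Module.End K M)
  have hc : (Subalgebra.centralizer K {D}).toSubmodule =
      LinearMap.ker (LinearMap.mulLeft K D - LinearMap.mulRight K D) := by
    ext f
    simp [Subalgebra.mem_centralizer_iff, sub_eq_zero, eq_comm]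
  have hT : ∀ p, (LinearMap.mulLeft K D - LinearMap.mulRight K D) (b.end p) =
      (d p.1 - d p.2) • b.end p := fun p => by
    simpa [Ring.lie_def] using b.lie_end_of_apply_eq_smul d D hD p.1 p.2
  rw [hc, b.end.finrank_ker_eq_card_of_apply_eq_smul hT]
  exact Nat.card_congr (Equiv.subtypeEquivRight fun p => sub_eq_zero)

end Module.Basis

theorem TensorProduct.lTensor_mul_map_of_mul_eq_smul {R M N : Type*} [CommRing R]
    [AddCommGroup M] [Module R M] [AddCommGroup N] [Module R N] (f : Module.End R M)
    {z g : Module.End R N} {c : R} (h : z * g = c • (g * z)) :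
    LinearMap.lTensor M z * map f g = c • (map f g * LinearMap.lTensor M z) := by
  rw [Module.End.mul_eq_comp, LinearMap.lTensor_comp_map, ← Module.End.mul_eq_comp, h,
    map_smul_right, Module.End.mul_eq_comp, Module.End.mul_eq_comp, LinearMap.map_comp_lTensor]

theorem Subgroup.closure_pair_subtype_eq_top {G : Type*} [Group G] (x y : G) :
    closure {(⟨x, subset_closure (Set.mem_insert x {y})⟩ : closure {x, y}),
      ⟨y, subset_closure (Set.mem_insert_of_mem x rfl)⟩} = ⊤ := by
  rw [← closure_closure_coe_preimage (k := {x, y})]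
  congr 1
  ext g
  simp [Subtype.ext_iff]

theorem Nat.card_eq_sum_sq_card_fiber {ι : Type*} [Fintype ι] (f : ι → ℕ) (N : ℕ)
    (hf : ∀ i, f i ≤ N) :
    Nat.card {p : ι × ι // f p.1 = f p.2} =
      ∑ w ∈ Finset.range (N + 1), Nat.card {i // f i = w} ^ 2 := by
  classical
  simp only [Nat.card_eq_fintype_card, Fintype.card_subtype]
  rw [Finset.card_eq_sum_card_fiberwise (f := fun p => f p.1) (t := Finset.range (N + 1))
    fun p _ => Finset.mem_range.2 (Nat.lt_succ_of_le (hf p.1))]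
  refine Finset.sum_congr rfl fun w _ => ?_
  rw [sq, ← Finset.card_product]
  congr 1
  ext ⟨i, j⟩
  simp only [Finset.mem_filter, Finset.mem_univ, true_and, Finset.mem_product]
  constructor
  · rintro ⟨h, rfl⟩
    exact ⟨rfl, h.symm⟩
  · rintro ⟨hi, hj⟩
    exact ⟨hi.trans hj.symm, hi⟩

namespace Representation

variable {k G W : Type*} [CommSemiring k] [Group G] [AddCommMonoid W] [Module k W]
  (ρ : Representation k G W)

theorem commute_apply_inv {f : Module.End k W} {g : G} (h : Commute f (ρ g)) :
    Commute f (ρ g⁻¹) := by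
  rw [← ρ.asGroupHom_apply, map_inv]
  exact (ρ.asGroupHom_apply g ▸ h).units_inv_right

def conj (g : G) : Module.End k (Module.End k W) :=
  LinearMap.mulLeft k (ρ g) ∘ₗ LinearMap.mulRight k (ρ g⁻¹)

theorem conj_apply (g : G) (f : Module.End k W) :
    ρ.conj g f = ρ g * f * ρ g⁻¹ :=
  (mul_assoc _ _ _).symm

theorem conj_eq_self_iff {g : G} {f : Module.End k W} :
    ρ.conj g f = f ↔ Commute f (ρ g) := by
  rw [ρ.conj_apply]
  constructor
  · intro h
    change f * ρ g = ρ g * f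
    conv_lhs => rw [← h]
    rw [mul_assoc, ← map_mul, inv_mul_cancel, map_one, mul_one]
  · intro h
    rw [← h.eq, mul_assoc, ← map_mul, mul_inv_cancel, map_one, mul_one]

theorem conj_involutive {x : G}
    (hxx : ρ (x * x) ∈ Subalgebra.center k (Module.End k W)) :
    Function.Involutive (ρ.conj x) := fun f => by
  rw [ρ.conj_apply, ρ.conj_apply]
  calc ρ x * (ρ x * f * ρ x⁻¹) * ρ x⁻¹ = ρ (x * x) * f * ρ (x⁻¹ * x⁻¹) := by
        simp only [map_mul, mul_assoc]
    _ = f * ρ (x * x) * ρ (x⁻¹ * x⁻¹) := by rw [Subalgebra.mem_center_iff.1 hxx f]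
    _ = f := by rw [mul_assoc, ← map_mul, show x * x * (x⁻¹ * x⁻¹) = 1 by group, map_one, mul_one]

theorem commute_conj_apply {x a : G} (hxa : a * x * a = x)
    {f : Module.End k W} (hf : Commute f (ρ a)) : Commute (ρ.conj x f) (ρ a) := by
  have hax : a * x = x * a⁻¹ := by nth_rewrite 2 [← hxa]; group
  have hxa' : x⁻¹ * a = a⁻¹ * x⁻¹ := by nth_rewrite 1 [← hxa]; group
  rw [ρ.conj_apply]
  calc ρ x * f * ρ x⁻¹ * ρ a = ρ x * (f * ρ a⁻¹) * ρ x⁻¹ := by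
        rw [mul_assoc, ← map_mul, hxa', map_mul]
        simp only [mul_assoc]
    _ = ρ (x * a⁻¹) * f * ρ x⁻¹ := by
        rw [(ρ.commute_apply_inv hf).eq, map_mul]
        simp only [mul_assoc]
    _ = ρ a * (ρ x * f * ρ x⁻¹) := by
        rw [← hax, map_mul]
        simp only [mul_assoc]

end Representation

section Commutant

variable {G W : Type*} [Group G] [AddCommGroup W] [Module ℂ W] (ρ : Representation ℂ G W)

theorem mem_equivEnd_iff_of_closure_eq_top {s : Set G} (hs : Subgroup.closure s = ⊤)
    {f : Module.End ℂ W} : f ∈ equivEnd ρ ↔ ∀ g ∈ s, Commute f (ρ g) := by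
  refine ⟨fun hf g _ => hf g, fun hf g => ?_⟩
  have hg : g ∈ Subgroup.closure s := hs ▸ Subgroup.mem_top g
  change Commute f (ρ g)
  induction hg using Subgroup.closure_induction with
  | mem g hg => exact hf g hg
  | one => exact (map_one ρ).symm ▸ Commute.one_right f
  | mul g h _ _ hg hh => exact (map_mul ρ g h).symm ▸ hg.mul_right hh
  | inv g _ hg => exact ρ.commute_apply_inv hg

theorem finrank_centralizer_eq_two_mul_finrank_equivEnd [FiniteDimensional ℂ W] {x a : G}
    (hgen : Subgroup.closure {x, a} = ⊤) (hxa : a * x * a = x)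
    (hxx : ρ (x * x) ∈ Subalgebra.center ℂ (Module.End ℂ W)) {Z : Module.End ℂ W}
    (hZZ : Z * Z = 1) (hZa : Commute Z (ρ a)) (hZx : Z * ρ x = -(ρ x * Z)) :
    finrank ℂ (Subalgebra.centralizer ℂ {ρ a}).toSubmodule = 2 * finrank ℂ (equivEnd ρ) := by
  set U := (Subalgebra.centralizer ℂ {ρ a}).toSubmodule
  have memU : ∀ {f}, f ∈ U ↔ Commute f (ρ a) := by
    simp [U, Subalgebra.mem_centralizer_iff, Commute, SemiconjBy, eq_comm]
  let Ψ : Module.End ℂ (Module.End ℂ W) := LinearMap.mulLeft ℂ Z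
  have hΨ : Function.Involutive Ψ := fun f => by
    simp only [Ψ, LinearMap.mulLeft_apply, ← mul_assoc, hZZ, one_mul]
  have hΦΨ : ∀ f, ρ.conj x (Ψ f) = -Ψ (ρ.conj x f) := fun f => by
    simp only [ρ.conj_apply, Ψ, LinearMap.mulLeft_apply, ← mul_assoc, hZx, neg_mul, neg_neg]
  have hC : equivEnd ρ = U ⊓ LinearMap.ker (ρ.conj x - 1) := by
    ext f
    rw [mem_equivEnd_iff_of_closure_eq_top ρ hgen, Submodule.mem_inf, memU, LinearMap.mem_ker,
      LinearMap.sub_apply, Module.End.one_apply, sub_eq_zero, ρ.conj_eq_self_iff]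
    simp [and_comm]
  rw [hC]
  exact U.finrank_eq_two_mul_finrank_inf_ker_sub_one (ρ.conj_involutive hxx) hΨ hΦΨ
    (fun f hf => memU.2 (ρ.commute_conj_apply hxa (memU.1 hf)))
    (fun f hf => memU.2 (hZa.mul_left (memU.1 hf)))

end Commutant

section TensorPower

def tpowBasis : (j : ℕ) → Basis (Fin (j + 1) → Fin 2) ℂ (TPow j)
  | 0 => (Pi.basisFun ℂ (Fin 2)).reindex (Equiv.funUnique (Fin 1) (Fin 2)).symm
  | j + 1 => ((tpowBasis j).tensorProduct (Pi.basisFun ℂ (Fin 2))).reindex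
      ((Equiv.prodComm _ _).trans (Fin.snocEquiv fun _ => Fin 2))

theorem tpowBasis_zero (a : Fin 1 → Fin 2) : tpowBasis 0 a = Pi.single (a 0) 1 := by
  change ((Pi.basisFun ℂ (Fin 2)).reindex (Equiv.funUnique (Fin 1) (Fin 2)).symm :
    Basis _ ℂ V2) a = _
  simp

theorem tpowBasis_succ (j : ℕ) (a : Fin (j + 2) → Fin 2) :
    tpowBasis (j + 1) a = tpowBasis j (Fin.init a) ⊗ₜ[ℂ] Pi.single (a (Fin.last _)) 1 := by
  change (((tpowBasis j).tensorProduct (Pi.basisFun ℂ (Fin 2))).reindex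
    ((Equiv.prodComm _ _).trans (Fin.snocEquiv fun _ => Fin 2)) : Basis _ ℂ (TPow j ⊗[ℂ] V2)) a = _
  simp [Basis.tensorProduct_apply]

variable {G : Subgroup (GL (Fin 2) ℂ)}

theorem stdRep_single_of_eq_diagonal {g : G} {d : Fin 2 → ℂ}
    (hg : ((g : GL (Fin 2) ℂ) : Matrix (Fin 2) (Fin 2) ℂ) = diagonal d) (c : Fin 2) :
    stdRep G g (Pi.single c 1) = d c • Pi.single c 1 := by
  change Matrix.toLin' _ _ = _
  rw [hg, Matrix.toLin'_apply, Matrix.mulVec_single]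
  ext i
  simp [Pi.single_apply]

theorem TPowRep_tpowBasis_of_eq_diagonal {g : G} {d : Fin 2 → ℂ}
    (hg : ((g : GL (Fin 2) ℂ) : Matrix (Fin 2) (Fin 2) ℂ) = diagonal d) (j : ℕ)
    (a : Fin (j + 1) → Fin 2) :
    TPowRep G j g (tpowBasis j a) = (∏ m, d (a m)) • tpowBasis j a := by
  induction j with
  | zero =>
    rw [tpowBasis_zero, Fin.prod_univ_one]
    exact stdRep_single_of_eq_diagonal hg _
  | succ j ih =>
    rw [tpowBasis_succ, Fin.prod_univ_castSucc]
    change TensorProduct.map _ _ _ = _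
    rw [TensorProduct.map_tmul, ih, stdRep_single_of_eq_diagonal hg, TensorProduct.smul_tmul_smul]
    rfl

theorem TPowRep_eq_smul_one {g : G} {c : ℂ}
    (hg : ((g : GL (Fin 2) ℂ) : Matrix (Fin 2) (Fin 2) ℂ) = c • 1) (j : ℕ) :
    TPowRep G j g = c ^ (j + 1) • 1 := by
  induction j with
  | zero =>
    change Matrix.toLin' _ = _
    rw [hg, map_smul, Matrix.toLin'_one, zero_add, pow_one]
    rfl
  | succ j ih =>
    change TensorProduct.map _ (Matrix.toLin' _) = _
    rw [ih, hg, map_smul, Matrix.toLin'_one, ← Module.End.one_eq_id, TensorProduct.map_smul_left,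
      TensorProduct.map_smul_right, smul_smul, ← pow_succ, TensorProduct.map_one]
    rfl

def pauliZ : Matrix (Fin 2) (Fin 2) ℂ := !![1, 0; 0, -1]

def signLast : (j : ℕ) → Module.End ℂ (TPow j)
  | 0 => Matrix.toLin' pauliZ
  | j + 1 => LinearMap.lTensor (TPow j) (Matrix.toLin' pauliZ)

theorem signLast_mul_self (j : ℕ) : signLast j * signLast j = 1 := by
  have h : Matrix.toLin' pauliZ * Matrix.toLin' pauliZ = 1 := by
    have : pauliZ * pauliZ = 1 := by
      ext i l; fin_cases i <;> fin_cases l <;> simp [pauliZ]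
    rw [Module.End.mul_eq_comp, ← Matrix.toLin'_mul, this, Matrix.toLin'_one]
    rfl
  cases j with
  | zero => exact h
  | succ j => exact (LinearMap.lTensor_mul _ _ _).symm.trans (h ▸ LinearMap.lTensor_id _ _)

theorem signLast_mul_TPowRep {g : G} {c : ℂ}
    (hg : pauliZ * ((g : GL (Fin 2) ℂ) : Matrix (Fin 2) (Fin 2) ℂ) =
      c • (((g : GL (Fin 2) ℂ) : Matrix (Fin 2) (Fin 2) ℂ) * pauliZ))
    (j : ℕ) : signLast j * TPowRep G j g = c • (TPowRep G j g * signLast j) := by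
  have h : Matrix.toLin' pauliZ * stdRep G g = c • (stdRep G g * Matrix.toLin' pauliZ) := by
    change Matrix.toLin' _ * Matrix.toLin' _ = c • (Matrix.toLin' _ * Matrix.toLin' _)
    rw [Module.End.mul_eq_comp, Module.End.mul_eq_comp, ← Matrix.toLin'_mul, ← Matrix.toLin'_mul,
      hg, map_smul]
  cases j with
  | zero => exact h
  | succ j => exact TensorProduct.lTensor_mul_map_of_mul_eq_smul (TPowRep G j g) h

theorem commute_signLast_TPowRep_of_eq_diagonal {g : G} {d : Fin 2 → ℂ}
    (hg : ((g : GL (Fin 2) ℂ) : Matrix (Fin 2) (Fin 2) ℂ) = diagonal d) (j : ℕ) :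
    Commute (signLast j) (TPowRep G j g) :=
  (signLast_mul_TPowRep (c := 1) (by
    rw [hg, one_smul]; ext i l; fin_cases i <;> fin_cases l <;> simp [pauliZ]) j).trans
    (one_smul ℂ _)

theorem signLast_mul_TPowRep_eq_neg {g : G}
    (hg : ((g : GL (Fin 2) ℂ) : Matrix (Fin 2) (Fin 2) ℂ) = !![0, -1; 1, 0]) (j : ℕ) :
    signLast j * TPowRep G j g = -(TPowRep G j g * signLast j) :=
  (signLast_mul_TPowRep (c := -1) (by
    rw [hg]; ext i l; fin_cases i <;> fin_cases l <;> simp [pauliZ]) j).trans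
    (neg_one_smul ℂ _)

theorem TPowRep_mul_self_mem_center {g : G}
    (hg : ((g : GL (Fin 2) ℂ) : Matrix (Fin 2) (Fin 2) ℂ) = !![0, -1; 1, 0]) (j : ℕ) :
    TPowRep G j (g * g) ∈ Subalgebra.center ℂ (Module.End ℂ (TPow j)) := by
  have hgg : (((g * g : G) : GL (Fin 2) ℂ) : Matrix (Fin 2) (Fin 2) ℂ) = (-1 : ℂ) • 1 := by
    rw [Subgroup.coe_mul, Units.val_mul, hg]
    ext i l; fin_cases i <;> fin_cases l <;> simp
  rw [TPowRep_eq_smul_one hgg j]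
  exact Subalgebra.smul_mem _ (Subalgebra.one_mem _) _

end TensorPower

section Weight

variable {K : ℕ}

def weight (a : Fin K → Fin 2) : ℕ := ∑ m, (a m : ℕ)

theorem weight_le (a : Fin K → Fin 2) : weight a ≤ K :=
  (Finset.sum_le_sum fun m _ => Fin.is_le (a m)).trans_eq (by simp)

theorem card_weight_eq (w : ℕ) :
    Nat.card {a : Fin K → Fin 2 // weight a = w} = K.choose w := by
  let e : (Fin K → Fin 2) ≃ Finset (Fin K) :=
    { toFun a := Finset.univ.filter (a · = 1)
      invFun s m := if m ∈ s then 1 else 0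
      left_inv a := funext fun m => by
        simp only [Finset.mem_filter, Finset.mem_univ, true_and]
        generalize a m = c
        fin_cases c <;> rfl
      right_inv s := by ext; simp }
  have he : ∀ a, weight a = (e a).card := fun a => by
    change _ = (Finset.univ.filter (a · = 1)).card
    rw [Finset.card_filter]
    refine Finset.sum_congr rfl fun m _ => ?_
    generalize a m = c
    fin_cases c <;> rfl
  rw [Nat.card_congr (e.subtypeEquiv (q := fun s => s.card = w) fun a => by rw [he]),
    Nat.card_eq_fintype_card, Fintype.card_finset_len, Fintype.card_fin]

theorem card_weight_eq_weight :
    Nat.card {p : (Fin K → Fin 2) × (Fin K → Fin 2) // weight p.1 = weight p.2} =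
      (2 * K).choose K := by
  rw [Nat.card_eq_sum_sq_card_fiber weight K weight_le, ← Nat.sum_range_choose_sq]
  simp only [card_weight_eq]

theorem prod_exp_eq (θ : ℂ) (a : Fin K → Fin 2) :
    ∏ m, ![Complex.exp θ, Complex.exp (-θ)] (a m) =
      Complex.exp θ ^ K * Complex.exp (-2 * θ) ^ weight a := by
  have h : ∀ c : Fin 2, ![Complex.exp θ, Complex.exp (-θ)] c =
      Complex.exp θ * Complex.exp (-2 * θ) ^ (c : ℕ) := by
    intro c
    fin_cases c
    · simp
    · simp [← Complex.exp_add]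
      ring_nf
  simp only [h, Finset.prod_mul_distrib, Finset.prod_const, Finset.card_univ, Fintype.card_fin,
    Finset.prod_pow_eq_pow_sum, weight]

theorem card_prod_exp_eq {n : ℕ} (hK : K < n) :
    Nat.card {p : (Fin K → Fin 2) × (Fin K → Fin 2) //
      ∏ m, ![Complex.exp (Real.pi * Complex.I / n), Complex.exp (-(Real.pi * Complex.I / n))] (p.1 m) =
        ∏ m, ![Complex.exp (Real.pi * Complex.I / n), Complex.exp (-(Real.pi * Complex.I / n))] (p.2 m)} =
      (2 * K).choose K := by
  set θ : ℂ := Real.pi * Complex.I / n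
  have hζ : IsPrimitiveRoot (Complex.exp (-2 * θ)) n := by
    have := (Complex.isPrimitiveRoot_exp n (by omega)).inv
    rwa [← Complex.exp_neg, show -(2 * Real.pi * Complex.I / n) = -2 * θ by ring] at this
  rw [← card_weight_eq_weight]
  refine Nat.card_congr (Equiv.subtypeEquivRight fun p => ?_)
  rw [prod_exp_eq, prod_exp_eq, mul_right_inj' (pow_ne_zero _ (Complex.exp_ne_zero _))]
  exact ⟨hζ.pow_inj ((weight_le _).trans_lt hK) ((weight_le _).trans_lt hK), congrArg _⟩

end Weight

theorem dim_equivEnd_tensorPower_dicyclic_lt_general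
    (n : ℕ) (X A : GL (Fin 2) ℂ)
    (hX : (X : Matrix (Fin 2) (Fin 2) ℂ) = !![0, -1; 1, 0])
    (hA : (A : Matrix (Fin 2) (Fin 2) ℂ) =
      !![Complex.exp (Real.pi * Complex.I / n), 0;
         0, Complex.exp (-(Real.pi * Complex.I / n))])
    (G : Subgroup (GL (Fin 2) ℂ)) (hG : G = Subgroup.closure {X, A})
    (k : ℕ) (hk : 1 ≤ k) (hkn : k < n) :
    (Module.finrank ℂ (equivEnd (TPowRep G (k - 1))) : ℚ) =
      (Nat.choose (2 * k) k : ℚ) / 2 := by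
  subst hG
  obtain ⟨j, rfl⟩ : ∃ j, k = j + 1 := ⟨k - 1, by omega⟩
  set x : Subgroup.closure {X, A} := ⟨X, Subgroup.subset_closure (Set.mem_insert X {A})⟩
  set a : Subgroup.closure {X, A} := ⟨A, Subgroup.subset_closure (Set.mem_insert_of_mem X rfl)⟩
  have hA' : ((a : GL (Fin 2) ℂ) : Matrix (Fin 2) (Fin 2) ℂ) = diagonal
      ![Complex.exp (Real.pi * Complex.I / n), Complex.exp (-(Real.pi * Complex.I / n))] := by
    rw [diagonal_fin_two]
    exact hA
  have hxa : a * x * a = x := Subtype.ext (Units.ext (by simp [a, x, hA, hX, ← Complex.exp_add]))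
  have := Module.Finite.of_basis (tpowBasis j)
  have key := finrank_centralizer_eq_two_mul_finrank_equivEnd (TPowRep _ j)
    (Subgroup.closure_pair_subtype_eq_top X A) hxa (TPowRep_mul_self_mem_center (g := x) hX j)
    (signLast_mul_self j) (commute_signLast_TPowRep_of_eq_diagonal hA' j)
    (signLast_mul_TPowRep_eq_neg (g := x) hX j)
  rw [(tpowBasis j).finrank_centralizer_eq_card_of_apply_eq_smul
    (TPowRep_tpowBasis_of_eq_diagonal hA' j), card_prod_exp_eq hkn] at key
  rw [Nat.add_sub_cancel, key]
  push_cast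
  ring

/-- For all integers `n > k ≥ 1`, the endomorphism algebra of the `k`-th tensor power of the
standard representation of the dicyclic group of degree `n` satisfies
`dim_ℂ End_{Dic_n}(V^{⊗k}) = (1/2)·binomial(2k,k)`. -/
theorem dim_equivEnd_tensorPower_dicyclic_lt
    (n : ℕ) (hn : 1 ≤ n) (X A : GL (Fin 2) ℂ)
    (hX : (X : Matrix (Fin 2) (Fin 2) ℂ) = !![0, -1; 1, 0])
    (hA : (A : Matrix (Fin 2) (Fin 2) ℂ) =
      !![Complex.exp (Real.pi * Complex.I / n), 0;
         0, Complex.exp (-(Real.pi * Complex.I / n))])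
    (G : Subgroup (GL (Fin 2) ℂ)) (hG : G = Subgroup.closure {X, A})
    (k : ℕ) (hk : 1 ≤ k) (hkn : k < n) :
    (Module.finrank ℂ (equivEnd (TPowRep G (k - 1))) : ℚ) =
      (Nat.choose (2 * k) k : ℚ) / 2 :=
  dim_equivEnd_tensorPower_dicyclic_lt_general n X A hX hA G hG k hk hkn
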